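/- arXiv:2204.09146 — 7 statements merged into one kernel-verified Lean document; each statement's English description precedes it below -/
import Mathlib

section
/- Let T be a bounded linear operator on a complex Hilbert space H that is both cohyponormal (‖Tx‖ ≤ ‖T*x‖ for all x ∈ H) and complex symmetric (there is a conjugation C on H with C T* C = T). Then T is normal, i.e. T T* = T* T. -/
open scoped InnerProductSpace ComplexConjugate

theorem norm_map_of_inner_map_map_eq_inner_swap {𝕜 E : Type*} [RCLike 𝕜]
    [NormedAddCommGroup E] [InnerProductSpace 𝕜 E] {C : E → E}
    (hC : ∀ x y : E, ⟪C x, C y⟫_𝕜 = ⟪y, x⟫_𝕜) (x : E) : ‖C x‖ = ‖x‖ := by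
  rw [norm_eq_sqrt_re_inner (𝕜 := 𝕜), norm_eq_sqrt_re_inner (𝕜 := 𝕜), hC]

namespace ContinuousLinearMap

variable {𝕜 E : Type*} [RCLike 𝕜] [NormedAddCommGroup E] [InnerProductSpace 𝕜 E]
  [CompleteSpace E]

theorem norm_adjoint_apply_eq_norm_apply_conj {T : E →L[𝕜] E} {C : E → E}
    (hC_norm : ∀ x : E, ‖C x‖ = ‖x‖) (hC_inv : ∀ x : E, C (C x) = x)
    (hsym : ∀ x : E, C (adjoint T (C x)) = T x) (x : E) :
    ‖adjoint T x‖ = ‖T (C x)‖ := by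
  rw [← hsym, hC_inv, hC_norm]

end ContinuousLinearMap

theorem cohyponormal_complex_symmetric_is_normal_general
    {H : Type*} [NormedAddCommGroup H] [InnerProductSpace ℂ H] [CompleteSpace H]
    (T : H →L[ℂ] H)
    (hcohypo : ∀ x : H, ‖T x‖ ≤ ‖ContinuousLinearMap.adjoint T x‖)
    (C : H → H)
    (hC_inv : ∀ x : H, C (C x) = x)
    (hC_inner : ∀ x y : H, ⟪C x, C y⟫_ℂ = ⟪y, x⟫_ℂ)
    (hsym : ∀ x : H, C (ContinuousLinearMap.adjoint T (C x)) = T x) :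
    T ∘L ContinuousLinearMap.adjoint T = ContinuousLinearMap.adjoint T ∘L T := by
  have hC_norm := norm_map_of_inner_map_map_eq_inner_swap hC_inner
  have hconj := ContinuousLinearMap.norm_adjoint_apply_eq_norm_apply_conj hC_norm hC_inv hsym
  have hnormal : IsStarNormal T :=
    ContinuousLinearMap.isStarNormal_iff_norm_eq_adjoint.mpr fun x =>
      (hcohypo x).antisymm <| calc
        ‖ContinuousLinearMap.adjoint T x‖ = ‖T (C x)‖ := hconj x
        _ ≤ ‖ContinuousLinearMap.adjoint T (C x)‖ := hcohypo (C x)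
        _ = ‖T x‖ := by rw [hconj, hC_inv]
  simpa only [ContinuousLinearMap.star_eq_adjoint, ContinuousLinearMap.mul_def] using
    hnormal.star_comm_self.symm.eq

/-- A bounded operator on a complex Hilbert space that is both cohyponormal and complex
symmetric is normal. -/
theorem cohyponormal_complex_symmetric_is_normal
    {H : Type*} [NormedAddCommGroup H] [InnerProductSpace ℂ H] [CompleteSpace H]
    (T : H →L[ℂ] H)
    (hcohypo : ∀ x : H, ‖T x‖ ≤ ‖ContinuousLinearMap.adjoint T x‖)
    (C : H → H)
    (hC_add : ∀ x y : H, C (x + y) = C x + C y)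
    (hC_smul : ∀ (a : ℂ) (x : H), C (a • x) = (conj a) • C x)
    (hC_inv : ∀ x : H, C (C x) = x)
    (hC_inner : ∀ x y : H, ⟪C x, C y⟫_ℂ = ⟪y, x⟫_ℂ)
    (hsym : ∀ x : H, C (ContinuousLinearMap.adjoint T (C x)) = T x) :
    T ∘L ContinuousLinearMap.adjoint T = ContinuousLinearMap.adjoint T ∘L T :=
  cohyponormal_complex_symmetric_is_normal_general T hcohypo C hC_inv hC_inner hsym
end

section
/- Let a ∈ (0,1) and let b ∈ ℂ with Re(b) > 0. Set φ(w) = a·w + b, ψ(w) = a⁻¹·w + a⁻¹·conj(b), and f(w) = 1/(1+w). Then N(f ∘ φ) = π/(a·(1 + Re b)), a⁻²·N(f ∘ ψ) = π/(a + Re b), and consequently N(f ∘ φ) > a⁻²·N(f ∘ ψ). (Since the adjoint of the composition operator C_φ on the Hardy space H²(ℂ₊) is a⁻¹·C_ψ, the function f = K₁ witnesses that C_φ is not cohyponormal when 0 < a < 1 and Re(b) > 0.) -/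
/-!
On the vertical line `Re w = x`, `|1 / (1 + k w + c)|²` is `π / (k (1 + Re c + k x))` times a
Cauchy density in `Im w`, so the slice integrals in `N` decrease in `x` and their supremum is the
value at `x = 0`. Both `φ` and `ψ` are of this affine form, with `(k, c) = (a, b)` and
`(a⁻¹, a⁻¹ conj b)`.
-/

open scoped ComplexConjugate

/-- `N f = sup_{x>0} ∫_ℝ |f(x+iy)|² dy`, with values in `[0,∞]`; up to a factor of `π`
this is the squared Hardy-space norm on the right half-plane. -/
noncomputable def N (f : ℂ → ℂ) : ENNReal :=
  ⨆ x > (0 : ℝ), ∫⁻ y : ℝ, (‖f (↑x + ↑y * Complex.I)‖₊ : ENNReal) ^ 2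

open MeasureTheory ProbabilityTheory Real Complex
open scoped ENNReal

lemma iSup_pos_eq_of_continuousWithinAt {α : Type*} [CompleteLattice α] [TopologicalSpace α]
    [ClosedIicTopology α] {g : ℝ → α} (hg : ContinuousWithinAt g (Set.Ioi 0) 0)
    (hle : ∀ x > 0, g x ≤ g 0) :
    ⨆ x > (0 : ℝ), g x = g 0 :=
  le_antisymm (iSup₂_le hle) <| le_of_tendsto hg <| by
    filter_upwards [self_mem_nhdsWithin] with x hx using
      le_iSup₂ (f := fun x (_ : x > 0) => g x) x hx

lemma nnnorm_inv_sq_eq_cauchyPDF {u k : ℝ} (hu : 0 < u) (hk : 0 < k) (d y : ℝ) :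
    (‖((u : ℂ) + ((k * y + d : ℝ) : ℂ) * I)⁻¹‖₊ : ℝ≥0∞) ^ 2
      = ENNReal.ofReal (π / (k * u)) * cauchyPDF (-d / k) (u / k).toNNReal y := by
  rw [cauchyPDF_def, ← ENNReal.ofReal_mul (by positivity), ← ENNReal.ofReal_coe_nnreal,
    ← ENNReal.ofReal_pow (by positivity)]
  congr 1
  rw [coe_nnnorm, norm_inv, inv_pow, Complex.sq_norm, normSq_add_mul_I, cauchyPDFReal_def,
    Real.coe_toNNReal _ (by positivity)]
  field_simp
  ring

lemma lintegral_nnnorm_inv_sq_on_vertical_line {u k : ℝ} (hu : 0 < u) (hk : 0 < k) (d : ℝ) :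
    ∫⁻ y : ℝ, (‖((u : ℂ) + ((k * y + d : ℝ) : ℂ) * I)⁻¹‖₊ : ℝ≥0∞) ^ 2
      = ENNReal.ofReal (π / (k * u)) := by
  simp_rw [nnnorm_inv_sq_eq_cauchyPDF hu hk d]
  rw [lintegral_const_mul _ (measurable_cauchyPDF _ _),
    lintegral_cauchyPDF_eq_one _ (Real.toNNReal_pos.2 (by positivity)).ne', mul_one]

theorem N_one_div_one_add_affine {k : ℝ} (hk : 0 < k) {c : ℂ} (hc : 0 < 1 + c.re) :
    N (fun w => 1 / (1 + (k * w + c))) = ENNReal.ofReal (π / (k * (1 + c.re))) := by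
  set g : ℝ → ℝ≥0∞ := fun x => ENNReal.ofReal (π / (k * (1 + c.re + k * x)))
  have slice : ∀ x > (0 : ℝ),
      ∫⁻ y : ℝ, (‖1 / (1 + (k * (x + y * I) + c))‖₊ : ℝ≥0∞) ^ 2 = g x := by
    intro x hx
    have hline : ∀ y : ℝ, 1 / (1 + (k * (x + y * I) + c))
        = (((1 + c.re + k * x : ℝ) : ℂ) + ((k * y + c.im : ℝ) : ℂ) * I)⁻¹ := by
      intro y
      rw [one_div]
      congr 1
      apply Complex.ext <;> simp only [add_re, add_im, mul_re, mul_im, ofReal_re, ofReal_im,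
        I_re, I_im, one_re, one_im] <;> ring
    simp_rw [hline]
    exact lintegral_nnnorm_inv_sq_on_vertical_line (by positivity) hk _
  have hcont : ContinuousWithinAt g (Set.Ioi 0) 0 :=
    ENNReal.continuous_ofReal.continuousAt.comp_continuousWithinAt <|
      continuousWithinAt_const.div (by fun_prop) (by simp [hk.ne', hc.ne'])
  have hle : ∀ x > 0, g x ≤ g 0 := fun x hx => ENNReal.ofReal_le_ofReal (by gcongr)
  rw [N, iSup_congr fun x => iSup_congr fun hx => slice x hx,
    iSup_pos_eq_of_continuousWithinAt hcont hle]
  simp [g]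

/-- For `0 < a < 1`, `Re b > 0`, `φ(w) = a·w + b`, `ψ(w) = a⁻¹·w + a⁻¹·conj b` and
`f(w) = 1/(1+w)`: `N(f∘φ) = π/(a(1+Re b))`, `a⁻²·N(f∘ψ) = π/(a+Re b)`, and hence
`N(f∘φ) > a⁻²·N(f∘ψ)`, witnessing that `C_φ` is not cohyponormal. -/
theorem not_cohyponormal_witness
    (a : ℝ) (ha : a ∈ Set.Ioo (0 : ℝ) 1) (b : ℂ) (hb : 0 < b.re)
    (φ ψ f : ℂ → ℂ)
    (hφ : ∀ w, φ w = (a : ℂ) * w + b)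
    (hψ : ∀ w, ψ w = (a : ℂ)⁻¹ * w + (a : ℂ)⁻¹ * conj b)
    (hf : ∀ w, f w = 1 / (1 + w)) :
    N (f ∘ φ) = ENNReal.ofReal (Real.pi / (a * (1 + b.re))) ∧
    ENNReal.ofReal (a⁻¹ ^ 2) * N (f ∘ ψ) = ENNReal.ofReal (Real.pi / (a + b.re)) ∧
    ENNReal.ofReal (a⁻¹ ^ 2) * N (f ∘ ψ) < N (f ∘ φ) := by
  obtain ⟨ha0, ha1⟩ := ha
  have hfφ : f ∘ φ = fun w => 1 / (1 + (a * w + b)) := funext fun w => by simp [hf, hφ]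
  have hfψ : f ∘ ψ = fun w => 1 / (1 + ((a⁻¹ : ℝ) * w + (a : ℂ)⁻¹ * conj b)) :=
    funext fun w => by simp [hf, hψ]
  have hNφ : N (f ∘ φ) = ENNReal.ofReal (π / (a * (1 + b.re))) := by
    rw [hfφ, N_one_div_one_add_affine ha0 (by linarith)]
  have hre : ((a : ℂ)⁻¹ * conj b).re = a⁻¹ * b.re := by
    rw [← ofReal_inv, re_ofReal_mul, conj_re]
  have hNψ : ENNReal.ofReal (a⁻¹ ^ 2) * N (f ∘ ψ) = ENNReal.ofReal (π / (a + b.re)) := by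
    rw [hfψ, N_one_div_one_add_affine (inv_pos.2 ha0) (by rw [hre]; positivity),
      ← ENNReal.ofReal_mul (by positivity), hre]
    congr 1
    field_simp
  refine ⟨hNφ, hNψ, ?_⟩
  rw [hNφ, hNψ, ENNReal.ofReal_lt_ofReal_iff (by positivity)]
  gcongr
  nlinarith
end

section
/- Let a > 1 and let b ∈ ℂ with Re(b) > 0. Then for every function f : ℂ → ℂ, sup over x > 0 of ∫_ℝ |f(a·(x + i·y) + b)|² dy ≤ a⁻² · (sup over x > 0 of ∫_ℝ |f(a⁻¹·(x + i·y) + a⁻¹·conj(b))|² dy), where the integrals are Lebesgue integrals with values in [0, ∞]. (This says that for φ(w) = a·w + b the composition operator C_φ on the Hardy space H²(ℂ₊) satisfies ‖C_φ f‖ ≤ ‖C_φ* f‖, i.e. C_φ is cohyponormal, since C_φ* = a⁻¹·C_ψ with ψ(w) = a⁻¹·w + a⁻¹·conj(b).) -/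
/-!
After the substitution `y ↦ r y + c`, the integral of `|f|²` along the image of the vertical line
`Re w = x` under `w ↦ r w + c` is `|r|⁻¹` times the integral along the line `Re w = r x + Re c`.
So the left side is `a⁻¹ · sup_{x>0} I(a x + Re b)` and the right side is
`a⁻² · a · sup_{x>0} I(a⁻¹ (x + Re b))`, where `I(u) = ∫ |f(u + iy)|² dy`. Since `a ≥ 1` and
`Re b ≥ 0`, every abscissa `a x + Re b` with `x > 0` is also of the form `a⁻¹ (x' + Re b)` with
`x' = a² x + (a - 1) Re b > 0`.
-/

open scoped ComplexConjugate ENNReal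
open MeasureTheory Complex

lemma lintegral_comp_mul_add (g : ℝ → ℝ≥0∞) {r : ℝ} (hr : r ≠ 0) (c : ℝ) :
    ∫⁻ y, g (r * y + c) = ENNReal.ofReal |r⁻¹| * ∫⁻ y, g y := by
  rw [← lintegral_add_right_eq_self g c, ← smul_eq_mul, ← lintegral_smul_measure,
    ← Real.map_volume_mul_left hr]
  exact (lintegral_map_equiv (fun t => g (t + c)) (MeasurableEquiv.mulLeft₀ r hr)).symm

lemma lintegral_comp_affine_verticalLine (g : ℂ → ℝ≥0∞) {r : ℝ} (hr : r ≠ 0) (c : ℂ) (x : ℝ) :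
    ∫⁻ y : ℝ, g (r * (x + y * I) + c) =
      ENNReal.ofReal |r⁻¹| * ∫⁻ y : ℝ, g ((r * x + c.re : ℝ) + y * I) := by
  have hline : ∀ y : ℝ,
      (r : ℂ) * (x + y * I) + c = (r * x + c.re : ℝ) + (r * y + c.im : ℝ) * I := fun y => by
    apply Complex.ext <;> simp
  simp_rw [hline]
  exact lintegral_comp_mul_add (fun t => g ((r * x + c.re : ℝ) + t * I)) hr c.im

lemma iSup_pos_comp_mul_add_le (F : ℝ → ℝ≥0∞) {a β : ℝ} (ha : 1 ≤ a) (hβ : 0 ≤ β) :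
    ⨆ x > (0 : ℝ), F (a * x + β) ≤ ⨆ x > (0 : ℝ), F (a⁻¹ * x + a⁻¹ * β) := by
  have ha0 : 0 < a := by linarith
  refine iSup₂_le fun x hx => le_iSup₂_of_le (a ^ 2 * x + (a - 1) * β)
    (add_pos_of_pos_of_nonneg (by positivity) (mul_nonneg (sub_nonneg.2 ha) hβ)) ?_
  rw [show a⁻¹ * (a ^ 2 * x + (a - 1) * β) + a⁻¹ * β = a * x + β by field_simp; ring]

/-- For `a > 1` and `Re b > 0`, every `f : ℂ → ℂ` satisfies
`sup_{x>0} ∫_ℝ |f(a(x+iy)+b)|² dy ≤ a⁻² · sup_{x>0} ∫_ℝ |f(a⁻¹(x+iy)+a⁻¹ conj b)|² dy`,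
i.e. the composition operator `C_φ` with `φ(w) = a·w+b` is cohyponormal on `H²(ℂ₊)`. -/
theorem cohyponormal_of_a_gt_one
    (a : ℝ) (ha : 1 < a) (b : ℂ) (hb : 0 < b.re) (f : ℂ → ℂ) :
    (⨆ x > (0 : ℝ), ∫⁻ y : ℝ,
        (‖f ((a : ℂ) * (↑x + ↑y * Complex.I) + b)‖₊ : ENNReal) ^ 2)
      ≤ ENNReal.ofReal (a⁻¹ ^ 2) *
        ⨆ x > (0 : ℝ), ∫⁻ y : ℝ,
          (‖f ((a : ℂ)⁻¹ * (↑x + ↑y * Complex.I) + (a : ℂ)⁻¹ * conj b)‖₊ : ENNReal) ^ 2 := by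
  have ha0 : 0 < a := by linarith
  set g : ℂ → ℝ≥0∞ := fun z => (‖f z‖₊ : ℝ≥0∞) ^ 2
  set V : ℝ → ℝ≥0∞ := fun u => ∫⁻ y : ℝ, g (u + y * I)
  calc (⨆ x > (0 : ℝ), ∫⁻ y : ℝ, g (a * (x + y * I) + b))
      = ENNReal.ofReal a⁻¹ * ⨆ x > (0 : ℝ), V (a * x + b.re) := by
        simp_rw [lintegral_comp_affine_verticalLine g ha0.ne', abs_inv, abs_of_pos ha0,
          ENNReal.mul_iSup, V]
    _ ≤ ENNReal.ofReal a⁻¹ * ⨆ x > (0 : ℝ), V (a⁻¹ * x + a⁻¹ * b.re) := by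
        gcongr _ * ?_
        exact iSup_pos_comp_mul_add_le V ha.le hb.le
    _ = ENNReal.ofReal (a⁻¹ ^ 2) *
          (ENNReal.ofReal a * ⨆ x > (0 : ℝ), V (a⁻¹ * x + a⁻¹ * b.re)) := by
        rw [← mul_assoc, ← ENNReal.ofReal_mul (by positivity)]
        congr 3
        field_simp
    _ = ENNReal.ofReal (a⁻¹ ^ 2) *
          ⨆ x > (0 : ℝ), ∫⁻ y : ℝ, g ((a : ℂ)⁻¹ * (x + y * I) + (a : ℂ)⁻¹ * conj b) := by
        simp_rw [← Complex.ofReal_inv, lintegral_comp_affine_verticalLine g (inv_ne_zero ha0.ne'),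
          re_ofReal_mul, conj_re, inv_inv, abs_of_pos ha0, ENNReal.mul_iSup, V]
end

section
/- Let φ : ℂ₊ → ℂ₊ be a self-map of the right half-plane. Then the identity u + φ(w) = φ(u) + w holds for all u, w ∈ ℂ₊ if and only if there exists b ∈ ℂ with Re(b) ≥ 0 such that φ(w) = w + b for all w ∈ ℂ₊. (The identity is equivalent to the reproducing-kernel equation K_{conj(u)}(φ(w)) = K_{conj(φ(u))}(w), which characterizes J-symmetry of the composition operator C_φ on H²(ℂ₊); thus C_φ is J-symmetric exactly for the parabolic symbols φ(w) = w + b, Re(b) ≥ 0.) -/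
theorem eq_add_sub_of_add_apply_eq_apply_add {G : Type*} [AddCommGroup G] {S : Set G}
    {f : G → G} (h : ∀ u ∈ S, ∀ w ∈ S, u + f w = f u + w) {u₀ : G} (hu₀ : u₀ ∈ S) :
    ∀ w ∈ S, f w = w + (f u₀ - u₀) := fun w hw => by
  rw [add_sub, eq_sub_iff_add_eq, add_comm, h u₀ hu₀ w hw, add_comm]

theorem Complex.re_nonneg_of_forall_re_pos_add {b : ℂ}
    (h : ∀ w : ℂ, 0 < w.re → 0 < (w + b).re) : 0 ≤ b.re :=
  le_of_forall_pos_lt_add fun ε hε => by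
    simpa [add_comm] using h ε (by simpa using hε)

/-- For a self-map `φ` of the right half-plane, the kernel identity
`u + φ(w) = φ(u) + w` (for all `u, w ∈ ℂ₊`), which characterizes `J`-symmetry of `C_φ` on
`H²(ℂ₊)`, holds if and only if `φ(w) = w + b` for some `b` with `Re b ≥ 0`. -/
theorem J_symmetric_iff_parabolic
    (φ : ℂ → ℂ) (hφ : ∀ w : ℂ, 0 < w.re → 0 < (φ w).re) :
    (∀ u w : ℂ, 0 < u.re → 0 < w.re → u + φ w = φ u + w) ↔
    (∃ b : ℂ, 0 ≤ b.re ∧ ∀ w : ℂ, 0 < w.re → φ w = w + b) := by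
  constructor
  · intro h
    have hφ_eq : ∀ w : ℂ, 0 < w.re → φ w = w + (φ 1 - 1) :=
      eq_add_sub_of_add_apply_eq_apply_add (S := {w : ℂ | 0 < w.re})
        (fun u hu w hw => h u w hu hw) (by simp)
    refine ⟨φ 1 - 1, Complex.re_nonneg_of_forall_re_pos_add fun w hw => ?_, hφ_eq⟩
    rw [← hφ_eq w hw]
    exact hφ w hw
  · rintro ⟨b, -, hφb⟩ u w hu hw
    rw [hφb u hu, hφb w hw]
    ring
end

section
/- For functions on ℂ define (Vf)(w) = (√2/(1+w))·f((1−w)/(1+w)), (V⁻¹g)(z) = (√2/(1+z))·g((1−z)/(1+z)), (J_𝕌 h)(z) = conj(h(conj(z))), and (C_{Φ₀}h)(z) = h(−z). Then for every f : ℂ → ℂ and every w ∈ ℂ₊, (V(J_𝕌(C_{Φ₀}(V⁻¹f))))(w) = (1/w)·conj(f(1/conj(w))). (This computes that the conjugation W₀ = V J_𝕌 C_{Φ₀} V⁻¹ on the Hardy space H²(ℂ₊) is given by (W₀f)(w) = (1/w)·conj(f(1/conj(w))).) -/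
open scoped ComplexConjugate

/-!
The Cayley map `c(z) = (1 - z)/(1 + z)` underlying `V` and `V⁻¹` is an involution that
commutes with complex conjugation and turns `z ↦ -z` into `z ↦ 1/z`. Hence `W₀ f` evaluates
`f` at `c(-c(conj w)) = 1/conj w`, and the two weights `√2/(1 + ·)` multiply out to `1/w`.
-/

section Cayley

variable {K : Type*} [Field K]

def cayley (z : K) : K := (1 - z) / (1 + z)

theorem cayley_def (z : K) : cayley z = (1 - z) / (1 + z) := rfl

theorem one_add_cayley {z : K} (hz : 1 + z ≠ 0) : 1 + cayley z = 2 / (1 + z) := by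
  rw [cayley_def]
  field_simp
  ring

theorem cayley_cayley [NeZero (2 : K)] {z : K} (hz : 1 + z ≠ 0) : cayley (cayley z) = z := by
  have hsub : 1 - cayley z = 2 * z / (1 + z) := by
    rw [cayley_def]
    field_simp
    ring
  rw [cayley_def (cayley z), hsub, one_add_cayley hz]
  field_simp

theorem cayley_inv {z : K} (hz : z ≠ 0) : cayley z⁻¹ = -cayley z := by
  rw [cayley_def, cayley_def, ← neg_div, neg_sub, add_comm 1 z]
  conv_lhs => rw [← mul_div_mul_left _ _ hz, mul_sub, mul_add, mul_one, mul_inv_cancel₀ hz]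

theorem map_cayley {L : Type*} [Field L] (σ : K →+* L) (z : K) :
    σ (cayley z) = cayley (σ z) := by
  simp only [cayley_def, map_div₀, map_sub, map_add, map_one]

end Cayley

theorem one_add_ne_zero_of_re_pos {z : ℂ} (hz : 0 < z.re) : 1 + z ≠ 0 :=
  Complex.ne_zero_of_re_pos <| by rw [Complex.add_re, Complex.one_re]; linarith

/-- With `V`, `V⁻¹` the standard isometric isomorphisms between `H²(𝕌)` and `H²(ℂ₊)`,
`J_𝕌` the conjugation `h ↦ conj ∘ h ∘ conj` and `C_{Φ₀} h = h(−·)`, the conjugation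
`W₀ = V J_𝕌 C_{Φ₀} V⁻¹` on `H²(ℂ₊)` is given by `(W₀ f)(w) = (1/w)·conj(f(1/conj w))`. -/
theorem W0_formula
    (V Vinv JU CPhi : (ℂ → ℂ) → (ℂ → ℂ))
    (hV : ∀ (f : ℂ → ℂ) (w : ℂ),
      V f w = (↑(Real.sqrt 2) / (1 + w)) * f ((1 - w) / (1 + w)))
    (hVinv : ∀ (g : ℂ → ℂ) (z : ℂ),
      Vinv g z = (↑(Real.sqrt 2) / (1 + z)) * g ((1 - z) / (1 + z)))
    (hJU : ∀ (h : ℂ → ℂ) (z : ℂ), JU h z = conj (h (conj z)))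
    (hCPhi : ∀ (h : ℂ → ℂ) (z : ℂ), CPhi h z = h (-z)) :
    ∀ (f : ℂ → ℂ) (w : ℂ), 0 < w.re →
      V (JU (CPhi (Vinv f))) w = (1 / w) * conj (f (1 / conj w)) := by
  intro f w hw
  have hw0 : w ≠ 0 := Complex.ne_zero_of_re_pos hw
  have h1w : 1 + w ≠ 0 := one_add_ne_zero_of_re_pos hw
  have h1w' : 1 + (conj w)⁻¹ ≠ 0 := one_add_ne_zero_of_re_pos <| by
    rw [Complex.inv_re, Complex.conj_re, Complex.normSq_conj]
    exact div_pos hw (Complex.normSq_pos.mpr hw0)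
  have hsqrt : (Real.sqrt 2 : ℂ) * Real.sqrt 2 = 2 := by
    exact_mod_cast Real.mul_self_sqrt zero_le_two
  simp only [hV, hJU, hCPhi, hVinv, ← cayley_def]
  rw [map_cayley, ← cayley_inv ((map_ne_zero conj).mpr hw0), cayley_cayley h1w',
    one_add_cayley h1w', one_div (conj w)]
  simp only [map_mul, map_div₀, map_add, map_inv₀, map_one, map_ofNat, Complex.conj_ofReal,
    Complex.conj_conj]
  generalize conj (f (conj w)⁻¹) = c
  field_simp
  linear_combination (w + 1) * c * hsqrt
end

section
/- Let φ : ℂ₊ → ℂ₊ be a self-map of the right half-plane. Then the identity φ(u)·w = u·φ(w) holds for all u, w ∈ ℂ₊ if and only if there exists a real number a > 0 such that φ(w) = a·w for all w ∈ ℂ₊. (The identity is the reproducing-kernel form of W₀-symmetry of the composition operator C_φ on H²(ℂ₊); thus C_φ is W₀-symmetric exactly for the symbols φ(w) = a·w with a > 0.) -/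
/-! Putting `u = 1` in the kernel identity gives `φ w = φ 1 · w`. Multiplication by `c = φ 1`
maps the right half-plane into itself only if `c` is a positive real: otherwise it rotates some
point `1 + t i` out of the half-plane. -/

namespace Complex

theorem im_eq_zero_of_forall_re_mul_pos {c : ℂ} (h : ∀ w : ℂ, 0 < w.re → 0 < (c * w).re) :
    c.im = 0 := by
  by_contra hc
  set t : ℝ := (c.re + 1) / c.im
  -- `t` is chosen so that `Re (c · (1 + t i)) = c.re - t · c.im = -1`.
  have hre : (c * (1 + t * I)).re = -1 := by
    have ht : t * c.im = c.re + 1 := div_mul_cancel₀ _ hc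
    simp only [mul_re, add_re, one_re, add_im, one_im, ofReal_re, ofReal_im, I_re, I_im, mul_im]
    linarith
  have := h (1 + t * I) (by simp)
  linarith

theorem exists_pos_eq_ofReal_of_forall_re_mul_pos {c : ℂ}
    (h : ∀ w : ℂ, 0 < w.re → 0 < (c * w).re) : ∃ a : ℝ, 0 < a ∧ c = a :=
  ⟨c.re, by simpa using h 1 one_pos, ext rfl (by simpa using im_eq_zero_of_forall_re_mul_pos h)⟩

end Complex

theorem eq_mul_of_forall_mul_comm (φ : ℂ → ℂ)
    (h : ∀ u w : ℂ, 0 < u.re → 0 < w.re → φ u * w = u * φ w) (w : ℂ) (hw : 0 < w.re) :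
    φ w = φ 1 * w := by
  simpa using (h 1 w one_pos hw).symm

/-- For a self-map `φ` of the right half-plane, the kernel identity
`φ(u)·w = u·φ(w)` (for all `u, w ∈ ℂ₊`), which characterizes `W₀`-symmetry of `C_φ` on
`H²(ℂ₊)`, holds if and only if `φ(w) = a·w` for some real `a > 0`. -/
theorem W0_symmetric_iff_dilation
    (φ : ℂ → ℂ) (hφ : ∀ w : ℂ, 0 < w.re → 0 < (φ w).re) :
    (∀ u w : ℂ, 0 < u.re → 0 < w.re → φ u * w = u * φ w) ↔
    (∃ a : ℝ, 0 < a ∧ ∀ w : ℂ, 0 < w.re → φ w = (a : ℂ) * w) := by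
  constructor
  · intro h
    have hlin := eq_mul_of_forall_mul_comm φ h
    obtain ⟨a, ha, hφ1⟩ := Complex.exists_pos_eq_ofReal_of_forall_re_mul_pos fun w hw =>
      hlin w hw ▸ hφ w hw
    exact ⟨a, ha, fun w hw => by rw [hlin w hw, hφ1]⟩
  · rintro ⟨a, -, hφa⟩ u w hu hw
    rw [hφa u hu, hφa w hw]
    ring
end

section
/- Let φ : ℂ₊ → ℂ₊ be a self-map of the right half-plane and let r ∈ ℝ. Then the identity (φ(u + i·r) − i·r)·w = u·(φ(w + i·r) − i·r) holds for all u, w ∈ ℂ₊ if and only if there exists a real number a > 0 such that φ(w) = a·w + i·(1−a)·r for all w ∈ ℂ₊. (This is the kernel-level form of J_r-symmetry of C_φ on H²(ℂ₊), where J_r = C_τ⁻¹ W₀ C_τ with τ(w) = w + i·r; it characterizes the composition operators that are J_r-symmetric for some r ∈ ℝ as exactly those induced by the maps φ(w) = a·w + i·b with a > 0 and b real, i.e. the hyperbolic automorphisms of ℂ₊ when a ≠ 1.) -/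
/-! Conjugating by the translation `τ`, the map `ψ w = φ (w + i r) - i r` is again a self-map of
`ℂ₊`, and the kernel identity says `ψ u * w = u * ψ w`; taking `u = 1` gives `ψ w = c * w` with
`c = ψ 1`. A linear map `w ↦ c * w` preserves `ℂ₊` only when `c` is a positive real, and undoing the
translation turns `ψ w = a * w` into `φ w = a * w + i (1 - a) r`. -/

open Complex

theorem apply_eq_apply_one_mul_of_mul_comm {ψ : ℂ → ℂ}
    (h : ∀ u w : ℂ, 0 < u.re → 0 < w.re → ψ u * w = u * ψ w) {w : ℂ} (hw : 0 < w.re) :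
    ψ w = ψ 1 * w := by
  simpa using (h 1 w one_pos hw).symm

theorem exists_pos_ofReal_eq_of_re_mul_pos {c : ℂ} (h : ∀ w : ℂ, 0 < w.re → 0 < (c * w).re) :
    ∃ a : ℝ, 0 < a ∧ (a : ℂ) = c := by
  have hre : 0 < c.re := by simpa using h 1 one_pos
  have him : c.im = 0 := by
    by_contra hne
    -- on the vertical line `1 + i t` the real part `c.re - c.im * t` takes every real value
    have hline (t : ℝ) : (c * (1 + I * t)).re = c.re - c.im * t := by simp
    have hpos := hline ((c.re + 1) / c.im) ▸ h _ (by simp)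
    rw [mul_div_cancel₀ _ hne] at hpos
    linarith
  exact ⟨c.re, hre, Complex.ext rfl (by simp [him])⟩

/-- For a self-map `φ` of the right half-plane and `r ∈ ℝ`, the kernel identity
`(φ(u + ir) − ir)·w = u·(φ(w + ir) − ir)` (for all `u, w ∈ ℂ₊`), which is the kernel-level
form of `J_r`-symmetry of `C_φ` on `H²(ℂ₊)`, holds if and only if
`φ(w) = a·w + i(1−a)r` for some real `a > 0`. -/
theorem Jr_symmetric_iff_hyperbolic_automorphism
    (φ : ℂ → ℂ) (hφ : ∀ w : ℂ, 0 < w.re → 0 < (φ w).re) (r : ℝ) :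
    (∀ u w : ℂ, 0 < u.re → 0 < w.re →
        (φ (u + Complex.I * r) - Complex.I * r) * w
          = u * (φ (w + Complex.I * r) - Complex.I * r)) ↔
    (∃ a : ℝ, 0 < a ∧ ∀ w : ℂ, 0 < w.re →
        φ w = (a : ℂ) * w + Complex.I * (1 - (a : ℂ)) * r) := by
  constructor
  · intro h
    set ψ : ℂ → ℂ := fun w => φ (w + I * r) - I * r with hψ_def
    have hψ : ∀ {w : ℂ}, 0 < w.re → ψ w = ψ 1 * w := apply_eq_apply_one_mul_of_mul_comm h
    obtain ⟨a, ha, hc⟩ := exists_pos_ofReal_eq_of_re_mul_pos (c := ψ 1) fun w hw => by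
      rw [← hψ hw]
      simpa [ψ] using hφ _ (by simpa using hw)
    refine ⟨a, ha, fun w hw => ?_⟩
    have hw' := hψ (w := w - I * r) (by simpa using hw)
    simp only [hψ_def, sub_add_cancel] at hw'
    rw [hc]
    linear_combination hw'
  · rintro ⟨a, -, hφa⟩ u w hu hw
    rw [hφa _ (by simpa using hu), hφa _ (by simpa using hw)]
    ring
end
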